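/- Let s > 0 and x > 0. There exists K such that the following holds for all n and d with n ≥ K·d² and d ≥ log^s(n): if G is a C4-free n-vertex graph with minimum degree δ(G) ≥ d, then for any vertex set W ⊆ V(G) with |W| ≤ d²·m^x (where m is the smallest even integer exceeding 80·log⁴(n/d²)), the average degree of G − W is at least d/2. -/
import Mathlib

open SimpleGraph Finset Real Filter

/-- `G` contains no cycle of length 4. -/
def C4Free {V : Type*} (G : SimpleGraph V) : Prop :=
  ∀ a b c d : V, G.Adj a b → G.Adj b c → G.Adj c d → G.Adj d a → a = c ∨ b = d

lemma cn_le_one {V : Type} [Fintype V] [DecidableEq V] (G : SimpleGraph V)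
    [DecidableRel G.Adj] (h : C4Free G) {w w' : V} (hne : w ≠ w') :
    (Finset.univ.filter (fun v => G.Adj v w ∧ G.Adj v w')).card ≤ 1 := by
  rw [Finset.card_le_one]
  intro a ha b hb
  simp only [Finset.mem_filter] at ha hb
  rcases h a w b w' ha.2.1 hb.2.1.symm hb.2.2 ha.2.2.symm with h1 | h1
  · exact h1
  · exact absurd h1 hne

lemma count_aux {V : Type} [Fintype V] [DecidableEq V] (G : SimpleGraph V)
    [DecidableRel G.Adj] (h : C4Free G) (Wf : Finset V) :
    ∑ v : V, ((G.neighborFinset v ∩ Wf).card) ^ 2 ≤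
      Wf.card ^ 2 + ∑ v : V, (G.neighborFinset v ∩ Wf).card := by
  have key : ∀ v : V, (G.neighborFinset v ∩ Wf).offDiag =
      Wf.offDiag.filter (fun p => G.Adj v p.1 ∧ G.Adj v p.2) := by
    intro v
    ext p
    simp only [Finset.mem_offDiag, Finset.mem_filter, Finset.mem_inter,
      mem_neighborFinset]
    tauto
  have h1 : ∑ v : V, ((G.neighborFinset v ∩ Wf).offDiag).card ≤ Wf.offDiag.card := by
    calc ∑ v : V, ((G.neighborFinset v ∩ Wf).offDiag).card
        = ∑ v : V, ∑ p ∈ Wf.offDiag, if G.Adj v p.1 ∧ G.Adj v p.2 then 1 else 0 := by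
          simp_rw [key, Finset.card_filter]
      _ = ∑ p ∈ Wf.offDiag, ∑ v : V, if G.Adj v p.1 ∧ G.Adj v p.2 then 1 else 0 :=
          Finset.sum_comm
      _ ≤ ∑ p ∈ Wf.offDiag, 1 := by
          apply Finset.sum_le_sum
          intro p hp
          have hne : p.1 ≠ p.2 := (Finset.mem_offDiag.1 hp).2.2
          calc (∑ v : V, if G.Adj v p.1 ∧ G.Adj v p.2 then 1 else 0)
              = (Finset.univ.filter (fun v => G.Adj v p.1 ∧ G.Adj v p.2)).card := by
                rw [Finset.card_filter]
            _ ≤ 1 := cn_le_one G h hne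
      _ = Wf.offDiag.card := by simp
  have h2 : ∀ s : Finset V, s.card ^ 2 = s.offDiag.card + s.card := by
    intro s
    rw [Finset.offDiag_card, sq]
    have : s.card ≤ s.card * s.card := by
      rcases Nat.eq_zero_or_pos s.card with h | h
      · simp [h]
      · exact Nat.le_mul_of_pos_left _ h
    omega
  calc ∑ v : V, ((G.neighborFinset v ∩ Wf).card) ^ 2
      = ∑ v : V, (((G.neighborFinset v ∩ Wf).offDiag).card + (G.neighborFinset v ∩ Wf).card) := by
        simp_rw [h2]
    _ = (∑ v : V, ((G.neighborFinset v ∩ Wf).offDiag).card) + ∑ v : V, (G.neighborFinset v ∩ Wf).card := Finset.sum_add_distrib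
    _ ≤ Wf.offDiag.card + ∑ v : V, (G.neighborFinset v ∩ Wf).card := by gcongr
    _ ≤ Wf.card ^ 2 + ∑ v : V, (G.neighborFinset v ∩ Wf).card := by
        have := h2 Wf; omega

lemma twice_ncard {V : Type} [Fintype V] [DecidableEq V] (G : SimpleGraph V)
    [DecidableRel G.Adj] (S : Set V) [DecidablePred (· ∈ S)] :
    2 * (G.induce S).edgeSet.ncard = ∑ v ∈ S.toFinset, (G.neighborFinset v ∩ S.toFinset).card := by
  classical
  have h1 : (G.induce S).edgeSet.ncard = (G.induce S).edgeFinset.card :=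
    Set.ncard_eq_toFinset_card' _
  rw [h1, ← SimpleGraph.sum_degrees_eq_twice_card_edges, Finset.sum_set_coe
    (f := fun v => (G.neighborFinset v ∩ S.toFinset).card) (s := S) |>.symm]
  apply Finset.sum_congr rfl
  intro v _
  rw [SimpleGraph.degree]
  apply Finset.card_bij (fun (u : ↥S) _ => (u : V))
  · intro u hu
    simp only [mem_neighborFinset] at hu
    simp only [Finset.mem_inter, mem_neighborFinset, Set.mem_toFinset]
    exact ⟨hu, u.2⟩
  · intro a ha b hb hab
    exact Subtype.ext hab
  · intro u hu
    simp only [Finset.mem_inter, mem_neighborFinset, Set.mem_toFinset] at hu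
    exact ⟨⟨u, hu.2⟩, by simp [mem_neighborFinset, SimpleGraph.comap, hu.1], rfl⟩

lemma analytic_aux (x : ℝ) (hx : 0 < x) :
    ∃ K₂ : ℝ, ∀ u : ℝ, K₂ ≤ u → 8 * (80 * (Real.log u) ^ 4 + 2) ^ x ≤ Real.sqrt u := by
  have hc : (0:ℝ) < (8 * (82:ℝ) ^ x)⁻¹ := by positivity
  have h := (isLittleO_log_rpow_rpow_atTop (4 * x) (by norm_num : (0:ℝ) < 1/2)).def hc
  have h2 : ∀ᶠ u in atTop, Real.exp 1 ≤ u := eventually_ge_atTop _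
  rcases (h.and h2).exists_forall_of_atTop with ⟨K₂, hK₂⟩
  refine ⟨K₂, fun u hu => ?_⟩
  obtain ⟨hlo, he⟩ := hK₂ u hu
  have hu1 : (1:ℝ) ≤ u := le_trans (by nlinarith [Real.add_one_le_exp 1]) he
  have hu0 : (0:ℝ) < u := by linarith
  have hL1 : (1:ℝ) ≤ Real.log u := (Real.le_log_iff_exp_le hu0).2 he
  have hL0 : (0:ℝ) ≤ Real.log u := by linarith
  set L := Real.log u with hLdef
  have hL4 : (1:ℝ) ≤ L ^ 4 := one_le_pow₀ hL1
  have hb : 80 * L ^ 4 + 2 ≤ 82 * L ^ 4 := by nlinarith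
  have h4 : (80 * L ^ 4 + 2) ^ x ≤ (82 * L ^ 4) ^ x :=
    Real.rpow_le_rpow (by positivity) hb (le_of_lt hx)
  have h5 : (82 * L ^ 4 : ℝ) ^ x = 82 ^ x * L ^ (4 * x) := by
    rw [Real.mul_rpow (by norm_num) (by positivity)]
    congr 1
    rw [← Real.rpow_natCast L 4, ← Real.rpow_mul hL0]
    norm_num
  have hnorm : ‖L ^ (4 * x)‖ ≤ (8 * (82:ℝ) ^ x)⁻¹ * ‖u ^ ((1:ℝ)/2)‖ := by
    simpa using hlo
  have hLpow : (0:ℝ) ≤ L ^ (4 * x) := Real.rpow_nonneg hL0 _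
  have hupow : (0:ℝ) ≤ u ^ ((1:ℝ)/2) := Real.rpow_nonneg (le_of_lt hu0) _
  rw [Real.norm_eq_abs, Real.norm_eq_abs, abs_of_nonneg hLpow, abs_of_nonneg hupow] at hnorm
  have hfin : 8 * (80 * L ^ 4 + 2) ^ x ≤ u ^ ((1:ℝ)/2) := by
    have h8 : (0:ℝ) < 8 * (82:ℝ) ^ x := by positivity
    calc 8 * (80 * L ^ 4 + 2) ^ x ≤ 8 * (82 ^ x * L ^ (4*x)) := by
          rw [← h5]; linarith
      _ = (8 * 82 ^ x) * L ^ (4*x) := by ring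
      _ ≤ (8 * 82 ^ x) * ((8 * (82:ℝ) ^ x)⁻¹ * u ^ ((1:ℝ)/2)) := by
          apply mul_le_mul_of_nonneg_left hnorm (le_of_lt h8)
      _ = u ^ ((1:ℝ)/2) := by field_simp
  rwa [Real.sqrt_eq_rpow]

set_option maxHeartbeats 1600000 in
/-- C4-free robust average-degree lemma: for `s, x > 0` there is `K` such that for
`n ≥ K·d²` and `d ≥ log^s n`, every C4-free `n`-vertex graph `G` with `δ(G) ≥ d`
satisfies: for every `W ⊆ V(G)` with `|W| ≤ d²·m^x` (where `m` is the smallest even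
integer exceeding `80·log⁴(n/d²)`), the average degree of `G − W` is at least `d/2`. -/
theorem stmt_7 (s x : ℝ) (hs : 0 < s) (hx : 0 < x) :
    ∃ K : ℝ, ∀ n d : ℕ, K * (d : ℝ) ^ 2 ≤ (n : ℝ) → (Real.log n) ^ s ≤ (d : ℝ) →
      ∀ (V : Type) (_ : Fintype V) (G : SimpleGraph V), Fintype.card V = n →
        C4Free G →
        (∀ v : V, (d : ℝ) ≤ ((G.neighborSet v).ncard : ℝ)) →
        ∀ m : ℕ, Even m → 80 * (Real.log ((n : ℝ) / (d : ℝ) ^ 2)) ^ 4 < (m : ℝ) →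
          (∀ m' : ℕ, Even m' → 80 * (Real.log ((n : ℝ) / (d : ℝ) ^ 2)) ^ 4 < (m' : ℝ) →
            m ≤ m') →
          ∀ W : Set V, (W.ncard : ℝ) ≤ (d : ℝ) ^ 2 * (m : ℝ) ^ x →
            (d : ℝ) / 2 ≤
              2 * (((G.induce Wᶜ).edgeSet.ncard : ℝ)) / (((Wᶜ : Set V).ncard : ℝ)) := by
  obtain ⟨K₂, hK₂⟩ := analytic_aux x hx
  refine ⟨max (Real.exp ((8:ℝ) ^ (1/s))) K₂, ?_⟩
  intro n d hKd hlogd V iV G hcard hC4 hdeg m hmeven hmgt hmmin W hW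
  classical
  rcases Nat.eq_zero_or_pos d with hd0 | hdpos
  · subst hd0
    simp only [Nat.cast_zero, zero_div]
    positivity
  have hd1 : (1:ℝ) ≤ (d:ℝ) := by exact_mod_cast hdpos
  have hdR0 : (0:ℝ) < (d:ℝ) := by linarith
  set dR := (d:ℝ) with hdRdef
  have hKmax0 : (0:ℝ) ≤ max (Real.exp ((8:ℝ) ^ (1/s))) K₂ :=
    le_trans (Real.exp_pos _).le (le_max_left _ _)
  have hKn : max (Real.exp ((8:ℝ) ^ (1/s))) K₂ ≤ (n:ℝ) := by
    calc max (Real.exp ((8:ℝ) ^ (1/s))) K₂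
        ≤ max (Real.exp ((8:ℝ) ^ (1/s))) K₂ * dR ^ 2 := by
          nlinarith [mul_nonneg hKmax0 (by nlinarith : (0:ℝ) ≤ dR ^ 2 - 1)]
      _ ≤ (n:ℝ) := hKd
  have hKexp : Real.exp ((8:ℝ) ^ (1/s)) ≤ (n:ℝ) := le_trans (le_max_left _ _) hKn
  have hn0 : (0:ℝ) < (n:ℝ) := lt_of_lt_of_le (Real.exp_pos _) hKexp
  have hlogn : (8:ℝ) ^ (1/s) ≤ Real.log n := (Real.le_log_iff_exp_le hn0).2 hKexp
  have hd8 : (8:ℝ) ≤ dR := by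
    have h1 : ((8:ℝ) ^ (1/s)) ^ s ≤ (Real.log n) ^ s :=
      Real.rpow_le_rpow (Real.rpow_nonneg (by norm_num) _) hlogn (le_of_lt hs)
    have h2 : ((8:ℝ) ^ (1/s)) ^ s = 8 := by
      rw [← Real.rpow_mul (by norm_num : (0:ℝ) ≤ 8), one_div,
        inv_mul_cancel₀ (ne_of_gt hs), Real.rpow_one]
    linarith [hlogd]
  -- the quantity u = n / d²
  set u := (n:ℝ) / dR ^ 2 with hudef
  have hu0 : (0:ℝ) < u := by positivity
  have huK : K₂ ≤ u := by
    rw [hudef, le_div_iff₀ (by positivity)]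
    calc K₂ * dR ^ 2 ≤ max (Real.exp ((8:ℝ) ^ (1/s))) K₂ * dR ^ 2 := by
          nlinarith [le_max_right (Real.exp ((8:ℝ) ^ (1/s))) K₂]
      _ ≤ (n:ℝ) := hKd
  have hsqu := hK₂ u huK
  -- m ≤ 80 log⁴ u + 2  (by minimality)
  have hm_ub : (m:ℝ) ≤ 80 * (Real.log u) ^ 4 + 2 := by
    by_contra hcon
    push_neg at hcon
    have h0 : (0:ℝ) ≤ 80 * (Real.log u) ^ 4 := by positivity
    have hm2 : 2 < m := by exact_mod_cast lt_of_le_of_lt (by linarith : (2:ℝ) ≤ 80 * (Real.log u) ^ 4 + 2) hcon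
    have heven' : Even (m - 2) :=
      (Nat.even_sub (by omega : 2 ≤ m)).2 (iff_of_true hmeven (by norm_num))
    have hc2 : ((m - 2 : ℕ) : ℝ) = (m:ℝ) - 2 := by
      rw [Nat.cast_sub (by omega : 2 ≤ m)]
      norm_num
    have hgt' : 80 * (Real.log ((n : ℝ) / (d : ℝ) ^ 2)) ^ 4 < ((m - 2 : ℕ) : ℝ) := by
      rw [hc2]
      linarith
    have := hmmin (m - 2) heven' hgt'
    omega
  have hmx : (m:ℝ) ^ x ≤ (80 * (Real.log u) ^ 4 + 2) ^ x :=
    Real.rpow_le_rpow (Nat.cast_nonneg _) hm_ub (le_of_lt hx)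
  have h8m : 8 * (m:ℝ) ^ x ≤ Real.sqrt u := le_trans (by linarith) hsqu
  have hnu : (n:ℝ) = dR ^ 2 * u := by
    rw [hudef]
    field_simp
  have hsqrtn : Real.sqrt n = dR * Real.sqrt u := by
    rw [hnu, Real.sqrt_mul (by positivity), Real.sqrt_sq hdR0.le]
  set wR := ((W.ncard : ℕ) : ℝ) with hwRdef
  have hwR0 : (0:ℝ) ≤ wR := Nat.cast_nonneg _
  clear_value wR
  have hsu0 : (0:ℝ) ≤ Real.sqrt u := Real.sqrt_nonneg _
  have hWn : wR ≤ dR * Real.sqrt n / 8 := by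
    calc wR ≤ dR ^ 2 * (m:ℝ) ^ x := hW
      _ ≤ dR ^ 2 * (Real.sqrt u / 8) := by nlinarith [Real.rpow_nonneg (Nat.cast_nonneg m) x]
      _ = dR * (dR * Real.sqrt u) / 8 := by ring
      _ = dR * Real.sqrt n / 8 := by rw [hsqrtn]
  have hdsqn : dR ≤ Real.sqrt n := by
    have hK1 : (1:ℝ) ≤ max (Real.exp ((8:ℝ) ^ (1/s))) K₂ :=
      le_trans (Real.one_le_exp (Real.rpow_nonneg (by norm_num) _)) (le_max_left _ _)
    have hdn : dR ^ 2 ≤ (n:ℝ) := by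
      have := mul_le_mul_of_nonneg_right hK1 (sq_nonneg dR)
      rw [one_mul] at this
      linarith
    calc dR = Real.sqrt (dR ^ 2) := (Real.sqrt_sq hdR0.le).symm
      _ ≤ Real.sqrt n := Real.sqrt_le_sqrt hdn
  have hsn : Real.sqrt n * Real.sqrt n = (n:ℝ) := Real.mul_self_sqrt hn0.le
  have hsn0 : (0:ℝ) ≤ Real.sqrt n := Real.sqrt_nonneg _
  have hWeighth : wR ≤ (n:ℝ) / 8 := by
    have h1 : dR * Real.sqrt n ≤ Real.sqrt n * Real.sqrt n :=
      mul_le_mul_of_nonneg_right hdsqn hsn0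
    linarith
  -- combinatorial part
  set Wf := W.toFinset with hWfdef
  set Cf := (Wᶜ : Set V).toFinset with hCfdef
  have hCfc : Cf = Wfᶜ := by simp [hCfdef, hWfdef, Set.toFinset_compl]
  have hwcard : Wf.card = W.ncard := (Set.ncard_eq_toFinset_card' W).symm
  have hNcardn : Cf.card = n - Wf.card := by
    rw [hCfc, Finset.card_compl, hcard]
  have hWle : Wf.card ≤ n := by rw [← hcard]; exact Finset.card_le_univ _
  set f : V → ℕ := fun v => (G.neighborFinset v ∩ Wf).card with hfdef
  have hA : ∑ v : V, (f v) ^ 2 ≤ Wf.card ^ 2 + ∑ v : V, f v := count_aux G hC4 Wf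
  set T : ℝ := ∑ v : V, (f v : ℝ) with hTdef
  have hT0 : (0:ℝ) ≤ T := Finset.sum_nonneg fun v _ => Nat.cast_nonneg _
  have hCS : T ^ 2 ≤ (n:ℝ) * ∑ v : V, (f v : ℝ) ^ 2 := by
    have := sq_sum_le_card_mul_sum_sq (s := (Finset.univ : Finset V))
      (f := fun v => (f v : ℝ))
    simpa [hcard] using this
  have hAR : ∑ v : V, (f v : ℝ) ^ 2 ≤ wR ^ 2 + T := by
    rw [hwRdef, ← hwcard, hTdef]
    exact_mod_cast hA
  clear_value T
  have hTsq : T ^ 2 ≤ (n:ℝ) * wR ^ 2 + (n:ℝ) * T := by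
    have h1 : (n:ℝ) * (∑ v : V, (f v : ℝ) ^ 2) ≤ (n:ℝ) * (wR ^ 2 + T) :=
      mul_le_mul_of_nonneg_left hAR hn0.le
    linarith [hCS]
  have hT : T ≤ (n:ℝ) + wR * Real.sqrt n := by
    by_contra hcon
    push_neg at hcon
    have hB0 : (0:ℝ) ≤ wR * Real.sqrt n := mul_nonneg hwR0 hsn0
    have hTpos : (0:ℝ) < T := lt_of_le_of_lt (by linarith) hcon
    have p1 : ((n:ℝ) + wR * Real.sqrt n) * T < T * T :=
      mul_lt_mul_of_pos_right hcon hTpos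
    have p2 : (wR * Real.sqrt n) * ((n:ℝ) + wR * Real.sqrt n) ≤ (wR * Real.sqrt n) * T :=
      mul_le_mul_of_nonneg_left hcon.le hB0
    have hsnw : wR ^ 2 * (Real.sqrt n * Real.sqrt n) = wR ^ 2 * (n:ℝ) := by rw [hsn]
    have hwn : (0:ℝ) ≤ wR * Real.sqrt n * (n:ℝ) := mul_nonneg hB0 hn0.le
    linarith only [p1, p2, hsnw, hwn, hTsq]
  -- edge counting
  have hB := twice_ncard G (Wᶜ : Set V)
  have hdegf : ∀ v, (G.neighborFinset v ∩ Cf).card = G.degree v - f v := by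
    intro v
    have h1 : (G.neighborFinset v ∩ Wf).card + (G.neighborFinset v \ Wf).card
        = (G.neighborFinset v).card := Finset.card_inter_add_card_sdiff _ _
    have h2 : G.neighborFinset v ∩ Cf = G.neighborFinset v \ Wf := by
      rw [hCfc, sdiff_eq]
      rfl
    have hfv : f v = (G.neighborFinset v ∩ Wf).card := rfl
    rw [h2, SimpleGraph.degree]
    omega
  have hfle : ∀ v, f v ≤ G.degree v := by
    intro v
    exact Finset.card_le_card (Finset.inter_subset_left)
  have hdegreal : ∀ v, dR ≤ (G.degree v : ℝ) := by
    intro v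
    have := hdeg v
    rwa [Set.ncard_eq_toFinset_card', ← SimpleGraph.neighborFinset_def] at this
  set e' := (G.induce (Wᶜ : Set V)).edgeSet.ncard with he'def
  have hBR : (2:ℝ) * e' = ∑ v ∈ Cf, ((G.degree v : ℝ) - (f v : ℝ)) := by
    rw [← hCfdef] at hB
    have : ((2 * e' : ℕ) : ℝ) = ((∑ v ∈ Cf, (G.neighborFinset v ∩ Cf).card : ℕ) : ℝ) := by
      exact_mod_cast hB
    push_cast at this
    rw [this]
    apply Finset.sum_congr rfl
    intro v _
    rw [hdegf v, Nat.cast_sub (hfle v)]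
  set NR := ((Cf.card : ℕ) : ℝ) with hNRdef
  clear_value e'
  have hT₀ : ∑ v ∈ Cf, (f v : ℝ) ≤ T := by
    rw [hTdef]
    apply Finset.sum_le_sum_of_subset_of_nonneg (Finset.subset_univ _)
    intro v _ _
    exact Nat.cast_nonneg _
  have h2e : dR * NR - T ≤ 2 * (e' : ℝ) := by
    rw [hBR]
    have : ∑ v ∈ Cf, ((G.degree v : ℝ) - (f v : ℝ)) ≥
        ∑ v ∈ Cf, (dR - (f v : ℝ)) := by
      apply Finset.sum_le_sum
      intro v _
      have := hdegreal v
      linarith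
    have hsplit : ∑ v ∈ Cf, (dR - (f v : ℝ)) = dR * NR - ∑ v ∈ Cf, (f v : ℝ) := by
      rw [Finset.sum_sub_distrib]
      simp [hNRdef, mul_comm]
    linarith
  have hNn : NR = (n:ℝ) - wR := by
    rw [hNRdef, hNcardn, Nat.cast_sub hWle, hwRdef, ← hwcard]
  clear_value NR
  have hNhalf : (n:ℝ) / 2 ≤ NR := by
    rw [hNn]
    linarith only [hWeighth]
  have hNR0 : (0:ℝ) < NR := by linarith only [hNhalf, hn0]
  have hTd : T ≤ dR * NR / 2 := by
    have h1 : T ≤ (n:ℝ) + wR * Real.sqrt n := hT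
    have ha : wR * Real.sqrt n ≤ dR * Real.sqrt n / 8 * Real.sqrt n :=
      mul_le_mul_of_nonneg_right hWn hsn0
    have hb : dR * (Real.sqrt n * Real.sqrt n) = dR * (n:ℝ) := by rw [hsn]
    have h2 : wR * Real.sqrt n ≤ dR * (n:ℝ) / 8 := by linarith only [ha, hb]
    have h3 : (n:ℝ) ≤ dR * (n:ℝ) / 8 := by
      have hc : (0:ℝ) ≤ (dR - 8) * (n:ℝ) := mul_nonneg (by linarith only [hd8]) hn0.le
      linarith only [hc]
    have hd : dR * ((n:ℝ)/2) ≤ dR * NR := mul_le_mul_of_nonneg_left hNhalf hdR0.le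
    linarith only [h1, h2, h3, hd]
  have hfinal : dR * NR / 2 ≤ 2 * (e' : ℝ) := by linarith only [hTd, h2e]
  -- conclude
  have hNcast : (((Wᶜ : Set V).ncard : ℕ) : ℝ) = NR := by
    rw [hNRdef, hCfdef, Set.ncard_eq_toFinset_card']
  rw [div_le_div_iff₀ (by norm_num) (by rw [hNcast]; exact hNR0)]
  rw [hNcast]
  calc dR * NR = 2 * (dR * NR / 2) := by ring
    _ ≤ 2 * (2 * (e' : ℝ)) := by linarith
    _ = 2 * (e' : ℝ) * 2 := by ring
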